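/- A vertex v of a graph G is in no minimal fort of G if and only if v is in no minimal zero forcing set of G. -/

import Mathlib

variable {V : Type*} [Fintype V] [DecidableEq V]

/-- A fort: nonempty set such that no vertex outside has exactly one neighbor inside. -/
def Fort (G : SimpleGraph V) (W : Set V) : Prop :=
  W.Nonempty ∧ ∀ v ∉ W, ¬ ∃! w, w ∈ W ∧ G.Adj v w

/-- A minimal fort contains no fort as a proper subset. -/
def MinimalFort (G : SimpleGraph V) (W : Set V) : Prop :=
  Fort G W ∧ ∀ W', Fort G W' → W' ⊆ W → W' = W

/-- The vertices that eventually get colored blue starting from `S`,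
under the zero forcing color change rule. -/
inductive Blue (G : SimpleGraph V) (S : Set V) : V → Prop
  | init {v : V} (h : v ∈ S) : Blue G S v
  | force {u v : V} (hadj : G.Adj u v) (hu : Blue G S u)
      (h : ∀ w, G.Adj u w → w ≠ v → Blue G S w) : Blue G S v

/-- A zero forcing set colors every vertex blue. -/
def ZeroForcing (G : SimpleGraph V) (S : Set V) : Prop := ∀ v, Blue G S v

def MinimalZeroForcing (G : SimpleGraph V) (S : Set V) : Prop :=
  ZeroForcing G S ∧ ∀ S', ZeroForcing G S' → S' ⊆ S → S' = S

/-- A stalled set: a proper subset of the vertex set from which no color change is possible. -/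
def Stalled (G : SimpleGraph V) (S : Set V) : Prop :=
  S ≠ Set.univ ∧ ∀ u ∈ S, ¬ ∃! w, w ∉ S ∧ G.Adj u w

def MaximalStalled (G : SimpleGraph V) (S : Set V) : Prop :=
  Stalled G S ∧ ∀ S', Stalled G S' → S ⊆ S' → S' = S

def FailedSet (G : SimpleGraph V) (S : Set V) : Prop := ¬ ZeroForcing G S

def MaximalFailed (G : SimpleGraph V) (S : Set V) : Prop :=
  FailedSet G S ∧ ∀ v ∉ S, ZeroForcing G (insert v S)

/-! A set is zero forcing exactly when it meets every fort: a fort disjoint from `S` never turns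
blue, and the vertices still white when forcing from `S` stalls form a fort. As every fort contains a
minimal one, meeting the minimal forts suffices. So if `v` lies in no minimal fort, removing `v` from
a zero forcing set leaves it zero forcing. Conversely, if `v` lies in a minimal fort `W`, then
`(W \ {v})ᶜ` meets every fort, and a minimal zero forcing subset of it must meet `W`, which it can
only do at `v`. -/

section

variable {α : Type*} {G : SimpleGraph α}

theorem minimalFort_iff_minimal {W : Set α} : MinimalFort G W ↔ Minimal (Fort G) W :=
  ⟨fun h ↦ minimal_iff.2 ⟨h.1, fun _ hW' hle ↦ (h.2 _ hW' hle).symm⟩,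
    fun h ↦ ⟨h.1, fun _ hW' hle ↦ h.eq_of_le hW' hle⟩⟩

theorem minimalZeroForcing_iff_minimal {S : Set α} :
    MinimalZeroForcing G S ↔ Minimal (ZeroForcing G) S :=
  ⟨fun h ↦ minimal_iff.2 ⟨h.1, fun _ hS' hle ↦ (h.2 _ hS' hle).symm⟩,
    fun h ↦ ⟨h.1, fun _ hS' hle ↦ h.eq_of_le hS' hle⟩⟩

theorem exists_minimalFort_subset [Finite α] {W : Set α} (hW : Fort G W) :
    ∃ W₀ ⊆ W, MinimalFort G W₀ := by
  obtain ⟨W₀, hle, hmin⟩ := exists_minimal_le_of_wellFoundedLT (Fort G) W hW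
  exact ⟨W₀, hle, minimalFort_iff_minimal.2 hmin⟩

theorem exists_minimalZeroForcing_subset [Finite α] {S : Set α} (hS : ZeroForcing G S) :
    ∃ S₀ ⊆ S, MinimalZeroForcing G S₀ := by
  obtain ⟨S₀, hle, hmin⟩ := exists_minimal_le_of_wellFoundedLT (ZeroForcing G) S hS
  exact ⟨S₀, hle, minimalZeroForcing_iff_minimal.2 hmin⟩

theorem Blue.notMem_of_fort {S W : Set α} (hW : Fort G W) (hSW : Disjoint S W) {x : α}
    (hx : Blue G S x) : x ∉ W := by
  induction hx with
  | init hxS => exact Set.disjoint_left.1 hSW hxS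
  | @force u y hadj _ _ ihu ih =>
    intro hyW
    refine hW.2 u ihu ⟨y, ⟨hyW, hadj⟩, fun w ⟨hwW, huw⟩ ↦ ?_⟩
    by_contra hwy
    exact ih w huw hwy hwW

theorem fort_setOf_not_blue {S : Set α} {x : α} (hx : ¬ Blue G S x) :
    Fort G {y | ¬ Blue G S y} := by
  refine ⟨⟨x, hx⟩, fun u hu ⟨y, ⟨hy, huy⟩, huniq⟩ ↦ hy ?_⟩
  refine Blue.force huy (not_not.1 hu) fun w huw hwy ↦ ?_
  by_contra hw
  exact hwy (huniq w ⟨hw, huw⟩)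

theorem zeroForcing_iff_forall_fort {S : Set α} :
    ZeroForcing G S ↔ ∀ W, Fort G W → (S ∩ W).Nonempty := by
  refine ⟨fun hS W hW ↦ ?_, fun h x ↦ ?_⟩
  · rw [← Set.not_disjoint_iff_nonempty_inter]
    intro hSW
    obtain ⟨x, hx⟩ := hW.1
    exact (hS x).notMem_of_fort hW hSW hx
  · by_contra hx
    obtain ⟨y, hyS, hy⟩ := h _ (fort_setOf_not_blue hx)
    exact hy (Blue.init hyS)

theorem zeroForcing_iff_forall_minimalFort [Finite α] {S : Set α} :
    ZeroForcing G S ↔ ∀ W, MinimalFort G W → (S ∩ W).Nonempty := by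
  rw [zeroForcing_iff_forall_fort]
  refine ⟨fun h W hW ↦ h W hW.1, fun h W hW ↦ ?_⟩
  obtain ⟨W₀, hW₀W, hW₀⟩ := exists_minimalFort_subset hW
  exact (h W₀ hW₀).mono (Set.inter_subset_inter_right S hW₀W)

theorem MinimalFort.zeroForcing_compl_diff_singleton {W : Set α} {v : α}
    (hW : MinimalFort G W) (hv : v ∈ W) : ZeroForcing G (W \ {v})ᶜ := by
  rw [zeroForcing_iff_forall_fort]
  intro W' hW'
  by_contra h
  rw [← Set.not_disjoint_iff_nonempty_inter, not_not, Set.disjoint_compl_left_iff_subset] at h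
  have hW'W : W' = W := hW.2 W' hW' (h.trans Set.sdiff_subset)
  exact (h (hW'W ▸ hv)).2 rfl

end

theorem fortIrrelevant_iff_zeroForcingIrrelevant (G : SimpleGraph V) (v : V) :
    (∀ W, MinimalFort G W → v ∉ W) ↔ (∀ S, MinimalZeroForcing G S → v ∉ S) := by
  constructor
  · intro hF S hS hvS
    have hzf : ZeroForcing G (S \ {v}) := zeroForcing_iff_forall_minimalFort.2 fun W hW ↦ by
      obtain ⟨x, hxS, hxW⟩ := zeroForcing_iff_forall_minimalFort.1 hS.1 W hW
      exact ⟨x, ⟨hxS, by rintro rfl; exact hF W hW hxW⟩, hxW⟩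
    exact (Set.sdiff_singleton_ssubset.2 hvS).ne (hS.2 _ hzf Set.sdiff_subset)
  · intro hZ W hW hvW
    obtain ⟨S, hSsub, hS⟩ :=
      exists_minimalZeroForcing_subset (hW.zeroForcing_compl_diff_singleton hvW)
    obtain ⟨x, hxS, hxW⟩ := zeroForcing_iff_forall_fort.1 hS.1 W hW.1
    have hxv : x = v := by
      by_contra hne
      exact hSsub hxS ⟨hxW, hne⟩
    exact hZ S hS (hxv ▸ hxS)
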